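/- Let K ⊆ [0,1] be closed and A ⊆ K with A infinite. Then the space K_A = (K × {0}) ∪ (A × {1}), with the order topology from the lexicographic order, has topological weight equal to the cardinality of A. -/

import Mathlib

open Set

/-- The separable compact line `K_A = (K × {0}) ∪ (A × {1})`, realized as a subtype of
`ℝ ×ₗ Bool`, ordered lexicographically. -/
abbrev KA (K A : Set ℝ) : Type :=
  {p : ℝ ×ₗ Bool // (ofLex p).1 ∈ K ∧ ((ofLex p).2 = true → (ofLex p).1 ∈ A)}

noncomputable instance (K A : Set ℝ) : TopologicalSpace (KA K A) := Preorder.topology (KA K A)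

instance (K A : Set ℝ) : OrderTopology (KA K A) := ⟨rfl⟩

/-- The topological weight of a space: the least cardinality of a topological basis. -/
noncomputable def weight (X : Type) [TopologicalSpace X] : Cardinal :=
  sInf {c : Cardinal | ∃ B : Set (Set X), TopologicalSpace.IsTopologicalBasis B ∧ Cardinal.mk B = c}

/-!
For `a ∈ A` the point `(a,1)` is the immediate successor of `(a,0)`, so `[(a,1), →)` is open and
every basis contains a set whose least element is `(a,1)`; hence `#A ≤ w(K_A)`.

Conversely, if `E ⊆ K_A` is such that any two points `x < y` either both lie in `E` or are
separated by a point of `E`, the open rays with endpoints in `E` generate the order topology.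
The points lying over `A`, over a countable dense subset of `K` and over the endpoints of the
(countably many) gaps of `K` form such a set, of cardinality `#A`.
-/

open TopologicalSpace Cardinal

theorem TopologicalSpace.IsTopologicalBasis.weight_le_mk {X : Type} [TopologicalSpace X]
    {B : Set (Set X)} (hB : IsTopologicalBasis B) : weight X ≤ #B :=
  csInf_le' ⟨B, hB, rfl⟩

theorem le_weight_of_forall_isTopologicalBasis {X : Type} [TopologicalSpace X] {c : Cardinal}
    (h : ∀ B : Set (Set X), IsTopologicalBasis B → c ≤ #B) : c ≤ weight X :=
  le_csInf ⟨_, _, isTopologicalBasis_opens, rfl⟩ fun _ ⟨B, hB, hc⟩ ↦ hc ▸ h B hB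

theorem mk_setOf_finite_subset_le {α : Type*} (S : Set α) :
    #{f : Set α | f.Finite ∧ f ⊆ S} ≤ #(Finset S) := by
  refine mk_le_of_surjective
    (f := fun F : Finset S ↦ ⟨(↑) '' (F : Set S), F.finite_toSet.image _, by simp⟩) ?_
  rintro ⟨f, hf, hfS⟩
  lift f to Set S using hfS
  lift f to Finset S using hf.of_finite_image Subtype.val_injective.injOn
  exact ⟨f, rfl⟩

theorem weight_le_of_eq_generateFrom {X : Type} [t : TopologicalSpace X] {S : Set (Set X)}
    (hS : t = generateFrom S) : weight X ≤ max ℵ₀ #S :=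
  calc weight X ≤ #((fun f ↦ ⋂₀ f) '' {f | f.Finite ∧ f ⊆ S}) :=
        (isTopologicalBasis_of_subbasis hS).weight_le_mk
    _ ≤ #(Finset S) := mk_image_le.trans (mk_setOf_finite_subset_le S)
    _ ≤ #(List S) := mk_le_of_surjective List.toFinset_surjective
    _ ≤ max ℵ₀ #S := mk_list_le_max S

theorem OrderTopology.eq_generateFrom_Ioi_Iio_of_exists_between {α : Type*} [LinearOrder α]
    [t : TopologicalSpace α] [OrderTopology α] {s : Set α}
    (hs : ∀ ⦃a b⦄, a < b → (a ∈ s ∧ b ∈ s) ∨ ∃ c ∈ s, a < c ∧ c < b) :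
    t = generateFrom (Ioi '' s ∪ Iio '' s) := by
  refine (OrderTopology.topology_eq_generate_intervals (α := α)).trans ?_
  refine le_antisymm (generateFrom_anti ?_) (le_generateFrom ?_)
  · simp only [union_subset_iff, image_subset_iff]
    exact ⟨fun a _ ↦ ⟨a, .inl rfl⟩, fun a _ ↦ ⟨a, .inr rfl⟩⟩
  let := generateFrom (Ioi '' s ∪ Iio '' s)
  rintro _ ⟨a, rfl | rfl⟩ <;> refine isOpen_iff_forall_mem_open.2 fun b hb ↦ ?_
  · obtain ⟨c, hcs, hac, hcb⟩ : ∃ c ∈ s, a ≤ c ∧ c < b := by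
      rcases hs hb with ⟨ha, -⟩ | ⟨c, hc, hac, hcb⟩
      exacts [⟨a, ha, le_rfl, hb⟩, ⟨c, hc, hac.le, hcb⟩]
    exact ⟨Ioi c, Ioi_subset_Ioi hac, .basic _ (.inl ⟨c, hcs, rfl⟩), hcb⟩
  · obtain ⟨c, hcs, hbc, hca⟩ : ∃ c ∈ s, b < c ∧ c ≤ a := by
      rcases hs hb with ⟨-, ha⟩ | ⟨c, hc, hbc, hca⟩
      exacts [⟨a, ha, hb, le_rfl⟩, ⟨c, hc, hbc, hca.le⟩]
    exact ⟨Iio c, Iio_subset_Iio hca, .basic _ (.inr ⟨c, hcs, rfl⟩), hbc⟩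

theorem TopologicalSpace.IsTopologicalBasis.mk_le_of_isOpen_Ici {X : Type*} [TopologicalSpace X]
    [PartialOrder X] {B : Set (Set X)} (hB : IsTopologicalBasis B) {S : Set X} (hS : ∀ x ∈ S, IsOpen (Ici x)) :
    #S ≤ #B := by
  choose U hUB hxU hUsub using fun x : S ↦ hB.exists_subset_of_mem_open self_mem_Ici (hS x x.2)
  refine mk_le_of_injective (f := fun x ↦ ⟨U x, hUB x⟩) fun x y hxy ↦ ?_
  have hU : U x = U y := congrArg Subtype.val hxy
  exact Subtype.ext <| le_antisymm (hUsub x (hU ▸ hxU y)) (hUsub y (hU ▸ hxU x))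

section Gaps

variable {α : Type*} [LinearOrder α] [TopologicalSpace α] [OrderTopology α] [DenselyOrdered α]

theorem Set.countable_setOf_gap [SeparableSpace α] (K : Set α) :
    {p : α × α | p.1 ∈ K ∧ p.2 ∈ K ∧ p.1 < p.2 ∧ Disjoint K (Ioo p.1 p.2)}.Countable := by
  refine PairwiseDisjoint.countable_of_isOpen (s := fun p ↦ Ioo p.1 p.2) ?_
    (fun _ _ ↦ isOpen_Ioo) fun p hp ↦ nonempty_Ioo.2 hp.2.2.1
  rintro p ⟨hp₁, hp₂, -, hp⟩ q ⟨hq₁, hq₂, -, hq⟩ hpq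
  refine disjoint_left.2 fun z ⟨hpz, hzp⟩ ⟨hqz, hzq⟩ ↦ hpq ?_
  have h₁ := disjoint_left.1 hp hq₁
  have h₂ := disjoint_left.1 hp hq₂
  have h₃ := disjoint_left.1 hq hp₁
  have h₄ := disjoint_left.1 hq hp₂
  simp only [mem_Ioo, not_and_or, not_lt] at h₁ h₂ h₃ h₄
  exact Prod.ext (by grind) (by grind)

theorem Set.exists_countable_subset_between [SecondCountableTopology α] (K : Set α) :
    ∃ C ⊆ K, C.Countable ∧
      ∀ a ∈ K, ∀ b ∈ K, a < b → (a ∈ C ∧ b ∈ C) ∨ ∃ c ∈ C, a < c ∧ c < b := by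
  obtain ⟨D, hDc, hD⟩ := exists_countable_dense K
  set P := {p : α × α | p.1 ∈ K ∧ p.2 ∈ K ∧ p.1 < p.2 ∧ Disjoint K (Ioo p.1 p.2)}
  refine ⟨(↑) '' D ∪ (Prod.fst '' P ∪ Prod.snd '' P), ?_, ?_, fun a ha b hb hab ↦ ?_⟩
  · rintro _ (⟨x, -, rfl⟩ | ⟨p, hp, rfl⟩ | ⟨p, hp, rfl⟩)
    exacts [x.2, hp.1, hp.2.1]
  · have hP := K.countable_setOf_gap
    exact (hDc.image _).union ((hP.image _).union (hP.image _))
  by_cases hgap : Disjoint K (Ioo a b)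
  · exact .inl ⟨.inr (.inl ⟨(a, b), ⟨ha, hb, hab, hgap⟩, rfl⟩),
      .inr (.inr ⟨(a, b), ⟨ha, hb, hab, hgap⟩, rfl⟩)⟩
  obtain ⟨c, hcK, hc⟩ := not_disjoint_iff.1 hgap
  obtain ⟨d, hdD, hd⟩ := hD.exists_mem_open (isOpen_Ioo.preimage continuous_subtype_val)
    ⟨⟨c, hcK⟩, hc⟩
  exact .inr ⟨d, .inl ⟨d, hdD, rfl⟩, hd⟩

end Gaps

namespace KA

variable {K A : Set ℝ}

def fst (x : KA K A) : ℝ := (ofLex x.1).1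

def snd (x : KA K A) : Bool := (ofLex x.1).2

def mk₀ {a : ℝ} (ha : a ∈ K) : KA K A := ⟨toLex (a, false), ha, by simp⟩

def mk₁ {a : ℝ} (haK : a ∈ K) (haA : a ∈ A) : KA K A := ⟨toLex (a, true), haK, fun _ ↦ haA⟩

@[simp] theorem fst_mk₀ {a : ℝ} (ha : a ∈ K) : (mk₀ (A := A) ha).fst = a := rfl

@[simp] theorem snd_mk₀ {a : ℝ} (ha : a ∈ K) : (mk₀ (A := A) ha).snd = false := rfl

@[simp] theorem fst_mk₁ {a : ℝ} (haK : a ∈ K) (haA : a ∈ A) : (mk₁ haK haA).fst = a := rfl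

@[simp] theorem snd_mk₁ {a : ℝ} (haK : a ∈ K) (haA : a ∈ A) : (mk₁ haK haA).snd = true := rfl

theorem lt_iff {x y : KA K A} : x < y ↔ x.fst < y.fst ∨ x.fst = y.fst ∧ x.snd < y.snd :=
  Subtype.coe_lt_coe.symm.trans Prod.Lex.lt_iff

theorem fst_mem_of_snd (x : KA K A) (h : x.snd = true) : x.fst ∈ A := x.2.2 h

theorem Ici_mk₁ {a : ℝ} (haK : a ∈ K) (haA : a ∈ A) :
    Ici (mk₁ haK haA) = Ioi (mk₀ (A := A) haK) := by
  ext x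
  rw [mem_Ici, mem_Ioi, ← not_lt, lt_iff, lt_iff]
  simp only [fst_mk₀, snd_mk₀, fst_mk₁, snd_mk₁, Bool.lt_iff]
  grind

theorem exists_between_of {C : Set ℝ} (hCK : C ⊆ K)
    (hC : ∀ a ∈ K, ∀ b ∈ K, a < b → (a ∈ C ∧ b ∈ C) ∨ ∃ c ∈ C, a < c ∧ c < b)
    ⦃x y : KA K A⦄ (hxy : x < y) :
    (x ∈ fst ⁻¹' (C ∪ A) ∧ y ∈ fst ⁻¹' (C ∪ A)) ∨ ∃ z ∈ fst ⁻¹' (C ∪ A), x < z ∧ z < y := by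
  rcases lt_iff.1 hxy with h | ⟨h, hsnd⟩
  · rcases hC _ x.2.1 _ y.2.1 h with ⟨hx, hy⟩ | ⟨c, hc, hxc, hcy⟩
    · exact .inl ⟨.inl hx, .inl hy⟩
    · exact .inr ⟨mk₀ (hCK hc), .inl hc, lt_iff.2 (.inl hxc), lt_iff.2 (.inl hcy)⟩
  · have hy : y.fst ∈ A := y.fst_mem_of_snd ((Bool.lt_iff.1 hsnd).2)
    exact .inl ⟨.inr (h ▸ hy), .inr hy⟩

theorem mk_preimage_fst_le (G : Set ℝ) : #(fst ⁻¹' G : Set (KA K A)) ≤ #(G × Bool) := by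
  refine mk_le_of_injective (f := fun x ↦ (⟨x.1.fst, x.2⟩, x.1.snd)) fun x y hxy ↦ ?_
  simp only [Prod.mk.injEq, Subtype.mk.injEq] at hxy
  exact Subtype.ext <| Subtype.ext <| Prod.ext hxy.1 hxy.2

theorem weight_le_mk (hA : ℵ₀ ≤ #A) : weight (KA K A) ≤ #A := by
  obtain ⟨C, hCK, hCc, hC⟩ := K.exists_countable_subset_between
  have hCA : #(C ∪ A : Set ℝ) ≤ #A :=
    (mk_union_le C A).trans (add_le_of_le hA (hCc.le_aleph0.trans hA) le_rfl)
  have hE : #(fst ⁻¹' (C ∪ A) : Set (KA K A)) ≤ #A :=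
    (mk_preimage_fst_le _).trans <| by
      simpa using mul_le_of_le hA hCA ((natCast_lt_aleph0 (n := 2)).le.trans hA)
  refine (weight_le_of_eq_generateFrom
    (OrderTopology.eq_generateFrom_Ioi_Iio_of_exists_between (exists_between_of hCK hC))).trans
    (max_le hA ?_)
  exact (mk_union_le _ _).trans (add_le_of_le hA (mk_image_le.trans hE) (mk_image_le.trans hE))

theorem mk_le_weight (hAK : A ⊆ K) : #A ≤ weight (KA K A) := by
  refine le_weight_of_forall_isTopologicalBasis fun B hB ↦ ?_
  have hinj : Function.Injective fun a : A ↦ mk₁ (hAK a.2) a.2 := fun a b hab ↦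
    Subtype.ext (congrArg fst hab)
  rw [← mk_range_eq _ hinj]
  refine hB.mk_le_of_isOpen_Ici ?_
  rintro _ ⟨a, rfl⟩
  rw [Ici_mk₁]
  exact isOpen_Ioi

end KA

theorem KA_weight_general (K A : Set ℝ)
    (hAK : A ⊆ K) (hAinf : A.Infinite) :
    weight (KA K A) = Cardinal.mk A :=
  have := hAinf.to_subtype
  le_antisymm (KA.weight_le_mk (aleph0_le_mk A)) (KA.mk_le_weight hAK)

theorem KA_weight (K A : Set ℝ)
    (hKsub : K ⊆ Set.Icc 0 1) (hKcl : IsClosed K) (hAK : A ⊆ K) (hAinf : A.Infinite) :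
    weight (KA K A) = Cardinal.mk A :=
  KA_weight_general K A hAK hAinf
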